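/- Let c > 0 and define α_k = 2/(c(k+1)) for k ≥ 1. Suppose nonnegative reals e_s (errors f(x_s) − f(x*) in expectation) and a_s = E[‖x_s − x*‖²] satisfy e_s ≤ ((c(s−1))/4) a_s + M/(c(s+1)) − ((c(s+1))/4) a_{s+1} for all s ≥ 1, where M > 0. Then min_{s=1,…,k} e_s ≤ 2M/(c(k+1)). -/

import Mathlib

/-!
Multiplying the recursion at step `s` by `s` makes the distance terms telescope: the coefficient
`c (s + 1) s / 4` of `a (s + 1)` at step `s` is exactly the coefficient of `a (s + 1)` at step
`s + 1`, and at `s = 1` the coefficient `c (s - 1) / 4` vanishes. Since `s / (s + 1) ≤ 1`, this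
gives `∑ s e_s ≤ k M / c`, and the smallest `e_s` is at most this weighted average, whose
weights sum to `k (k + 1) / 2`.
-/

open Finset

theorem Finset.exists_mul_sum_le_sum_mul {ι R : Type*} [CommSemiring R] [LinearOrder R]
    [IsOrderedRing R] {S : Finset ι} (hS : S.Nonempty) (w e : ι → R)
    (hw : ∀ i ∈ S, 0 ≤ w i) :
    ∃ i ∈ S, e i * ∑ j ∈ S, w j ≤ ∑ j ∈ S, w j * e j := by
  obtain ⟨i, hi, hmin⟩ := S.exists_min_image e hS
  refine ⟨i, hi, ?_⟩
  rw [mul_sum]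
  refine sum_le_sum fun j hj => ?_
  rw [mul_comm]
  exact mul_le_mul_of_nonneg_left (hmin j hj) (hw j hj)

theorem sum_Icc_one_natCast (k : ℕ) : ∑ s ∈ Icc 1 k, (s : ℝ) = k * (k + 1) / 2 := by
  induction k with
  | zero => simp
  | succ n ih =>
    rw [sum_Icc_succ_top (by omega), ih]
    push_cast
    ring

theorem natCast_mul_div_mul_add_one_le {c M : ℝ} (hc : 0 < c) (hM : 0 ≤ M) (s : ℕ) :
    s * (M / (c * (s + 1))) ≤ M / c := by
  rw [mul_div_assoc', div_le_div_iff₀ (by positivity) hc]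
  nlinarith [mul_nonneg hM hc.le]

noncomputable def weightedDist (c : ℝ) (a : ℕ → ℝ) (s : ℕ) : ℝ :=
  c * s * (s - 1) / 4 * a s

theorem weightedDist_nonneg {c : ℝ} (hc : 0 ≤ c) {a : ℕ → ℝ} {s : ℕ} (ha : 0 ≤ a s) :
    0 ≤ weightedDist c a s := by
  cases s with
  | zero => simp [weightedDist]
  | succ s =>
    simp only [weightedDist, Nat.cast_add, Nat.cast_one, add_sub_cancel_right]
    positivity

theorem natCast_mul_le_weightedDist_sub {c M e : ℝ} (hc : 0 < c) (hM : 0 ≤ M) (a : ℕ → ℝ)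
    {s : ℕ} (hrec : e ≤ c * ((s : ℝ) - 1) / 4 * a s + M / (c * ((s : ℝ) + 1))
      - c * ((s : ℝ) + 1) / 4 * a (s + 1)) :
    s * e ≤ weightedDist c a s - weightedDist c a (s + 1) + M / c := by
  have hstep := mul_le_mul_of_nonneg_left hrec (Nat.cast_nonneg (α := ℝ) s)
  have hM' := natCast_mul_div_mul_add_one_le hc hM s
  simp only [weightedDist, Nat.cast_add, Nat.cast_one, add_sub_cancel_right]
  linarith

theorem sum_Icc_natCast_mul_le {c M : ℝ} (hc : 0 < c) (hM : 0 ≤ M) (e a : ℕ → ℝ)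
    (hrec : ∀ s : ℕ, 1 ≤ s →
      e s ≤ c * ((s : ℝ) - 1) / 4 * a s + M / (c * ((s : ℝ) + 1))
            - c * ((s : ℝ) + 1) / 4 * a (s + 1))
    {k : ℕ} (hk : 1 ≤ k) :
    ∑ s ∈ Icc 1 k, (s : ℝ) * e s ≤ k * M / c - weightedDist c a (k + 1) := by
  have hsum : ∑ s ∈ Icc 1 k, (s : ℝ) * e s
      ≤ ∑ s ∈ Icc 1 k, (M / c - (weightedDist c a (s + 1) - weightedDist c a s)) :=
    sum_le_sum fun s hs => by
      have := natCast_mul_le_weightedDist_sub hc hM a (hrec s (mem_Icc.mp hs).1)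
      linarith
  rw [sum_sub_distrib, sum_Icc_sub (f := weightedDist c a) hk, sum_const, Nat.card_Icc] at hsum
  simp only [weightedDist, Nat.cast_one, sub_self, mul_zero, zero_div, zero_mul,
    add_tsub_cancel_right, nsmul_eq_mul] at hsum
  simp only [weightedDist]
  linarith [mul_div_assoc (k : ℝ) M c]

theorem weighted_telescoping_rate_general
    (c M : ℝ) (hc : 0 < c) (hM : 0 < M)
    (e a : ℕ → ℝ) (ha : ∀ s, 0 ≤ a s)
    (hrec : ∀ s : ℕ, 1 ≤ s →
      e s ≤ c * ((s : ℝ) - 1) / 4 * a s + M / (c * ((s : ℝ) + 1))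
            - c * ((s : ℝ) + 1) / 4 * a (s + 1))
    (k : ℕ) (hk : 1 ≤ k) :
    ∃ s, 1 ≤ s ∧ s ≤ k ∧ e s ≤ 2 * M / (c * ((k : ℝ) + 1)) := by
  obtain ⟨m, hm, hmin⟩ := exists_mul_sum_le_sum_mul (nonempty_Icc.mpr hk) (fun s ↦ (s : ℝ)) e
    fun s _ ↦ Nat.cast_nonneg s
  refine ⟨m, (mem_Icc.mp hm).1, (mem_Icc.mp hm).2, ?_⟩
  have hdist := weightedDist_nonneg hc.le (ha (k + 1))
  have hbound := sum_Icc_natCast_mul_le hc hM.le e a hrec hk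
  rw [sum_Icc_one_natCast] at hmin
  have hk' : (0 : ℝ) < k := by exact_mod_cast hk
  calc e m ≤ (k * M / c) / (k * (k + 1) / 2) := (le_div_iff₀ (by positivity)).mpr (by linarith)
    _ = 2 * M / (c * (k + 1)) := by field_simp

/-- Telescoping/weighted-averaging argument of Theorem 1: if the errors `e s`
satisfy the one-step recursion with stepsize `α_s = 2/(c(s+1))`, then the best
error among the first `k` iterations is at most `2M/(c(k+1))`. -/
theorem weighted_telescoping_rate
    (c M : ℝ) (hc : 0 < c) (hM : 0 < M)
    (e a : ℕ → ℝ) (he : ∀ s, 0 ≤ e s) (ha : ∀ s, 0 ≤ a s)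
    (hrec : ∀ s : ℕ, 1 ≤ s →
      e s ≤ c * ((s : ℝ) - 1) / 4 * a s + M / (c * ((s : ℝ) + 1))
            - c * ((s : ℝ) + 1) / 4 * a (s + 1))
    (k : ℕ) (hk : 1 ≤ k) :
    ∃ s, 1 ≤ s ∧ s ≤ k ∧ e s ≤ 2 * M / (c * ((k : ℝ) + 1)) :=
  weighted_telescoping_rate_general c M hc hM e a ha hrec k hk
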